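/- arXiv:1104.3076 — 4 statements merged into one kernel-verified Lean document; each statement's English description precedes it below -/
import Mathlib

section
/- An empty rectangle Q = [a,b] × [c,d] contained in R is a maximal empty rectangle if and only if all four of the following hold: (i) a = x₀ or there is a point p ∈ P with p.x = a and c < p.y < d; (ii) b = x₁ or there is a point p ∈ P with p.x = b and c < p.y < d; (iii) c = y₀ or there is a point p ∈ P with p.y = c and a < p.x < b; (iv) d = y₁ or there is a point p ∈ P with p.y = d and a < p.x < b. In words: Q is maximal exactly when each side of Q either lies on the corresponding side of R or contains a point of P in its relative interior. -/
/-!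
Since a subrectangle of an empty rectangle is empty, `Q` is maximal as soon as none of its four
sides can be pushed outwards on its own. With the other three sides fixed, moving the left side
only involves the finitely many abscissae of points of `P` in the strip `c < y < d`: the side can
be moved iff `a > x₀` and `a` is none of them, because a finite set missing `a` misses a whole
neighbourhood of `a`. The other three sides are symmetric.
-/

/-- `Q = [a,b] × [c,d]` is an empty axis-parallel rectangle inside
`R = [x₀,x₁] × [y₀,y₁]` for the point set `P`: its sides are within `R` and
its open interior contains no point of `P`. -/
def EmptyRect (P : Finset (ℝ × ℝ)) (x₀ x₁ y₀ y₁ a b c d : ℝ) : Prop :=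
  x₀ ≤ a ∧ a < b ∧ b ≤ x₁ ∧ y₀ ≤ c ∧ c < d ∧ d ≤ y₁ ∧
  ∀ p ∈ P, ¬ (a < p.1 ∧ p.1 < b ∧ c < p.2 ∧ p.2 < d)

/-- A maximal empty rectangle: an empty rectangle not properly contained in
any other empty rectangle. -/
def MaxEmptyRect (P : Finset (ℝ × ℝ)) (x₀ x₁ y₀ y₁ a b c d : ℝ) : Prop :=
  EmptyRect P x₀ x₁ y₀ y₁ a b c d ∧
  ∀ a' b' c' d', EmptyRect P x₀ x₁ y₀ y₁ a' b' c' d' →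
    a' ≤ a → b ≤ b' → c' ≤ c → d ≤ d' →
    (a' = a ∧ b' = b ∧ c' = c ∧ d' = d)

open Set

section Interval

variable {α : Type*} [LinearOrder α] [TopologicalSpace α] [OrderTopology α]
  {s : Set α} {x₀ x₁ a b : α}

theorem forall_lt_not_disjoint_Ioo_iff (hs : s.Finite) (h₀ : x₀ ≤ a) (hab : a < b)
    (hdisj : Disjoint s (Ioo a b)) :
    (∀ a', x₀ ≤ a' → a' < a → ¬Disjoint s (Ioo a' b)) ↔ a = x₀ ∨ a ∈ s := by
  constructor
  · intro h
    by_contra! ⟨hne, has⟩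
    obtain ⟨a', ⟨ha'₀, ha'a⟩, hgap⟩ :=
      exists_Ioc_subset_of_mem_nhds' (hs.isClosed.isOpen_compl.mem_nhds has)
        (lt_of_le_of_ne h₀ (Ne.symm hne))
    refine h a' ha'₀ ha'a ((disjoint_union_right.mpr ⟨?_, hdisj⟩).mono_right
      Ioo_subset_Ioc_union_Ioo)
    exact subset_compl_iff_disjoint_left.mp hgap
  · rintro (rfl | ha) a' ha' ha'a
    · exact absurd ha' ha'a.not_ge
    · exact fun hd => disjoint_left.mp hd ha ⟨ha'a, hab⟩

theorem forall_gt_not_disjoint_Ioo_iff (hs : s.Finite) (h₁ : b ≤ x₁) (hab : a < b)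
    (hdisj : Disjoint s (Ioo a b)) :
    (∀ b', b < b' → b' ≤ x₁ → ¬Disjoint s (Ioo a b')) ↔ b = x₁ ∨ b ∈ s := by
  constructor
  · intro h
    by_contra! ⟨hne, hbs⟩
    obtain ⟨b', ⟨hbb', hb'₁⟩, hgap⟩ :=
      exists_Ico_subset_of_mem_nhds' (hs.isClosed.isOpen_compl.mem_nhds hbs)
        (lt_of_le_of_ne h₁ hne)
    refine h b' hbb' hb'₁ ((disjoint_union_right.mpr ⟨hdisj, ?_⟩).mono_right
      Ioo_subset_Ioo_union_Ico)
    exact subset_compl_iff_disjoint_left.mp hgap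
  · rintro (rfl | hb) b' hbb' hb'
    · exact absurd hb' hbb'.not_ge
    · exact fun hd => disjoint_left.mp hd hb ⟨hab, hbb'⟩

end Interval
section Rectangle

variable {P : Finset (ℝ × ℝ)} {x₀ x₁ y₀ y₁ a b c d : ℝ}

def stripXs (P : Finset (ℝ × ℝ)) (c d : ℝ) : Set ℝ := {x | ∃ p ∈ P, p.1 = x ∧ c < p.2 ∧ p.2 < d}

def stripYs (P : Finset (ℝ × ℝ)) (a b : ℝ) : Set ℝ := {y | ∃ p ∈ P, p.2 = y ∧ a < p.1 ∧ p.1 < b}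

theorem finite_stripXs : (stripXs P c d).Finite :=
  (P.finite_toSet.image Prod.fst).subset fun _ ⟨p, hp, hx, _⟩ => ⟨p, hp, hx⟩

theorem finite_stripYs : (stripYs P a b).Finite :=
  (P.finite_toSet.image Prod.snd).subset fun _ ⟨p, hp, hy, _⟩ => ⟨p, hp, hy⟩

theorem emptyRect_iff_disjoint_stripXs :
    EmptyRect P x₀ x₁ y₀ y₁ a b c d ↔
      x₀ ≤ a ∧ a < b ∧ b ≤ x₁ ∧ y₀ ≤ c ∧ c < d ∧ d ≤ y₁ ∧ Disjoint (stripXs P c d) (Ioo a b) := by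
  refine and_congr_right' <| and_congr_right' <| and_congr_right' <| and_congr_right' <|
    and_congr_right' <| and_congr_right' ⟨fun hP => disjoint_left.mpr ?_, ?_⟩
  · rintro - ⟨p, hp, rfl, hc, hd⟩ ⟨ha, hb⟩
    exact hP p hp ⟨ha, hb, hc, hd⟩
  · rintro hP p hp ⟨ha, hb, hc, hd⟩
    exact disjoint_left.mp hP ⟨p, hp, rfl, hc, hd⟩ ⟨ha, hb⟩

theorem emptyRect_iff_disjoint_stripYs :
    EmptyRect P x₀ x₁ y₀ y₁ a b c d ↔
      x₀ ≤ a ∧ a < b ∧ b ≤ x₁ ∧ y₀ ≤ c ∧ c < d ∧ d ≤ y₁ ∧ Disjoint (stripYs P a b) (Ioo c d) := by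
  refine and_congr_right' <| and_congr_right' <| and_congr_right' <| and_congr_right' <|
    and_congr_right' <| and_congr_right' ⟨fun hP => disjoint_left.mpr ?_, ?_⟩
  · rintro - ⟨p, hp, rfl, ha, hb⟩ ⟨hc, hd⟩
    exact hP p hp ⟨ha, hb, hc, hd⟩
  · rintro hP p hp ⟨ha, hb, hc, hd⟩
    exact disjoint_left.mp hP ⟨p, hp, rfl, ha, hb⟩ ⟨hc, hd⟩

theorem EmptyRect.mono {a' b' c' d' : ℝ} (h : EmptyRect P x₀ x₁ y₀ y₁ a' b' c' d')
    (ha : a' ≤ a) (hab : a < b) (hb : b ≤ b') (hc : c' ≤ c) (hcd : c < d) (hd : d ≤ d') :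
    EmptyRect P x₀ x₁ y₀ y₁ a b c d := by
  obtain ⟨h₀, -, h₁, h₂, -, h₃, hP⟩ := h
  exact ⟨h₀.trans ha, hab, hb.trans h₁, h₂.trans hc, hcd, hd.trans h₃,
    fun p hp ⟨hpa, hpb, hpc, hpd⟩ =>
      hP p hp ⟨ha.trans_lt hpa, hpb.trans_le hb, hc.trans_lt hpc, hpd.trans_le hd⟩⟩

theorem maxEmptyRect_iff (hQ : EmptyRect P x₀ x₁ y₀ y₁ a b c d) :
    MaxEmptyRect P x₀ x₁ y₀ y₁ a b c d ↔
      (∀ a', x₀ ≤ a' → a' < a → ¬EmptyRect P x₀ x₁ y₀ y₁ a' b c d) ∧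
      (∀ b', b < b' → b' ≤ x₁ → ¬EmptyRect P x₀ x₁ y₀ y₁ a b' c d) ∧
      (∀ c', y₀ ≤ c' → c' < c → ¬EmptyRect P x₀ x₁ y₀ y₁ a b c' d) ∧
      (∀ d', d < d' → d' ≤ y₁ → ¬EmptyRect P x₀ x₁ y₀ y₁ a b c d') := by
  have hab : a < b := hQ.2.1
  have hcd : c < d := hQ.2.2.2.2.1
  refine ⟨fun hM => ⟨?_, ?_, ?_, ?_⟩, fun ⟨hL, hR, hB, hT⟩ => ⟨hQ, ?_⟩⟩
  · exact fun a' _ ha' h => ha'.ne (hM.2 _ _ _ _ h ha'.le le_rfl le_rfl le_rfl).1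
  · exact fun b' hb' _ h => hb'.ne' (hM.2 _ _ _ _ h le_rfl hb'.le le_rfl le_rfl).2.1
  · exact fun c' _ hc' h => hc'.ne (hM.2 _ _ _ _ h le_rfl le_rfl hc'.le le_rfl).2.2.1
  · exact fun d' hd' _ h => hd'.ne' (hM.2 _ _ _ _ h le_rfl le_rfl le_rfl hd'.le).2.2.2
  intro a' b' c' d' h ha hb hc hd
  exact ⟨ha.eq_of_not_lt fun ha' => hL a' h.1 ha' (h.mono le_rfl (ha.trans_lt hab) hb hc hcd hd),
    (hb.eq_of_not_lt fun hb' => hR b' hb' h.2.2.1 (h.mono ha (hab.trans_le hb) le_rfl hc hcd hd)).symm,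
    hc.eq_of_not_lt fun hc' => hB c' h.2.2.2.1 hc' (h.mono ha hab hb le_rfl (hc.trans_lt hcd) hd),
    (hd.eq_of_not_lt fun hd' =>
      hT d' hd' h.2.2.2.2.2.1 (h.mono ha hab hb hc (hcd.trans_le hd) le_rfl)).symm⟩

theorem EmptyRect.not_emptyRect_left_iff (hQ : EmptyRect P x₀ x₁ y₀ y₁ a b c d) :
    (∀ a', x₀ ≤ a' → a' < a → ¬EmptyRect P x₀ x₁ y₀ y₁ a' b c d) ↔
      a = x₀ ∨ ∃ p ∈ P, p.1 = a ∧ c < p.2 ∧ p.2 < d := by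
  obtain ⟨h₀, hab, hb, hc, hcd, hd, hP⟩ := emptyRect_iff_disjoint_stripXs.mp hQ
  refine (forall₃_congr fun a' ha' ha'a => ?_).trans
    (forall_lt_not_disjoint_Ioo_iff finite_stripXs h₀ hab hP)
  simp only [emptyRect_iff_disjoint_stripXs, ha', ha'a.trans hab, hb, hc, hcd, hd, true_and]

theorem EmptyRect.not_emptyRect_right_iff (hQ : EmptyRect P x₀ x₁ y₀ y₁ a b c d) :
    (∀ b', b < b' → b' ≤ x₁ → ¬EmptyRect P x₀ x₁ y₀ y₁ a b' c d) ↔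
      b = x₁ ∨ ∃ p ∈ P, p.1 = b ∧ c < p.2 ∧ p.2 < d := by
  obtain ⟨h₀, hab, hb, hc, hcd, hd, hP⟩ := emptyRect_iff_disjoint_stripXs.mp hQ
  refine (forall₃_congr fun b' hbb' hb' => ?_).trans
    (forall_gt_not_disjoint_Ioo_iff finite_stripXs hb hab hP)
  simp only [emptyRect_iff_disjoint_stripXs, h₀, hab.trans hbb', hb', hc, hcd, hd, true_and]

theorem EmptyRect.not_emptyRect_bottom_iff (hQ : EmptyRect P x₀ x₁ y₀ y₁ a b c d) :
    (∀ c', y₀ ≤ c' → c' < c → ¬EmptyRect P x₀ x₁ y₀ y₁ a b c' d) ↔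
      c = y₀ ∨ ∃ p ∈ P, p.2 = c ∧ a < p.1 ∧ p.1 < b := by
  obtain ⟨h₀, hab, hb, hc, hcd, hd, hP⟩ := emptyRect_iff_disjoint_stripYs.mp hQ
  refine (forall₃_congr fun c' hc' hc'c => ?_).trans
    (forall_lt_not_disjoint_Ioo_iff finite_stripYs hc hcd hP)
  simp only [emptyRect_iff_disjoint_stripYs, h₀, hab, hb, hc', hc'c.trans hcd, hd, true_and]

theorem EmptyRect.not_emptyRect_top_iff (hQ : EmptyRect P x₀ x₁ y₀ y₁ a b c d) :
    (∀ d', d < d' → d' ≤ y₁ → ¬EmptyRect P x₀ x₁ y₀ y₁ a b c d') ↔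
      d = y₁ ∨ ∃ p ∈ P, p.2 = d ∧ a < p.1 ∧ p.1 < b := by
  obtain ⟨h₀, hab, hb, hc, hcd, hd, hP⟩ := emptyRect_iff_disjoint_stripYs.mp hQ
  refine (forall₃_congr fun d' hdd' hd' => ?_).trans
    (forall_gt_not_disjoint_Ioo_iff finite_stripYs hd hcd hP)
  simp only [emptyRect_iff_disjoint_stripYs, h₀, hab, hb, hc, hcd.trans hdd', hd', true_and]

end Rectangle

theorem mer_characterization_general
    (x₀ x₁ y₀ y₁ : ℝ)
    (P : Finset (ℝ × ℝ))
    (a b c d : ℝ) (hQ : EmptyRect P x₀ x₁ y₀ y₁ a b c d) :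
    MaxEmptyRect P x₀ x₁ y₀ y₁ a b c d ↔
      ((a = x₀ ∨ ∃ p ∈ P, p.1 = a ∧ c < p.2 ∧ p.2 < d) ∧
       (b = x₁ ∨ ∃ p ∈ P, p.1 = b ∧ c < p.2 ∧ p.2 < d) ∧
       (c = y₀ ∨ ∃ p ∈ P, p.2 = c ∧ a < p.1 ∧ p.1 < b) ∧
       (d = y₁ ∨ ∃ p ∈ P, p.2 = d ∧ a < p.1 ∧ p.1 < b)) := by
  rw [maxEmptyRect_iff hQ, hQ.not_emptyRect_left_iff, hQ.not_emptyRect_right_iff,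
    hQ.not_emptyRect_bottom_iff, hQ.not_emptyRect_top_iff]

theorem mer_characterization
    (x₀ x₁ y₀ y₁ : ℝ) (hx : x₀ < x₁) (hy : y₀ < y₁)
    (P : Finset (ℝ × ℝ))
    (hP : ∀ p ∈ P, x₀ ≤ p.1 ∧ p.1 ≤ x₁ ∧ y₀ ≤ p.2 ∧ p.2 ≤ y₁)
    (a b c d : ℝ) (hQ : EmptyRect P x₀ x₁ y₀ y₁ a b c d) :
    MaxEmptyRect P x₀ x₁ y₀ y₁ a b c d ↔
      ((a = x₀ ∨ ∃ p ∈ P, p.1 = a ∧ c < p.2 ∧ p.2 < d) ∧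
       (b = x₁ ∨ ∃ p ∈ P, p.1 = b ∧ c < p.2 ∧ p.2 < d) ∧
       (c = y₀ ∨ ∃ p ∈ P, p.2 = c ∧ a < p.1 ∧ p.1 < b) ∧
       (d = y₁ ∨ ∃ p ∈ P, p.2 = d ∧ a < p.1 ∧ p.1 < b)) :=
  mer_characterization_general x₀ x₁ y₀ y₁ P a b c d hQ
end

section
/- The set of all maximal empty rectangles in R determined by the n points of P is finite, and its cardinality m satisfies m ≤ (n + 2)². In particular, the number of maximal empty rectangles is O(n²). -/
/-!
Every side of a maximal empty rectangle is supported: it lies on the boundary of `R` or has a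
point of `P` in its relative interior, for otherwise it could be pushed outwards. Two maximal
empty rectangles with the same horizontal extent whose vertical extents overlap coincide, since
the rectangle spanning both is empty. Hence a maximal empty rectangle is determined by the
supports of its left and right sides when one of them is a point (whose height lies in both
vertical extents), and, when both sides lie on the boundary, by the support of its bottom side.
This leaves at most `(n + 1)² + (n + 1) ≤ (n + 2)²` possibilities.
-/

open Set Topology

theorem Set.finite_and_ncard_le_of_cover {α κ : Type*} {s : Set α} (K : Finset κ)
    (R : κ → α → Prop) (hcover : ∀ x ∈ s, ∃ k ∈ K, R k x)
    (hunique : ∀ k, {x ∈ s | R k x}.Subsingleton) :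
    s.Finite ∧ s.ncard ≤ K.card := by
  rcases s.eq_empty_or_nonempty with rfl | ⟨x, hx⟩
  · simp
  obtain ⟨k, -, -⟩ := hcover x hx
  have : Nonempty κ := ⟨k⟩
  choose! f hfK hf using hcover
  have hinj : InjOn f s := fun x hx y hy hxy =>
    hunique (f x) ⟨hx, hf x hx⟩ ⟨hy, hxy ▸ hf y hy⟩
  exact ⟨Finite.of_injOn hfK hinj K.finite_toSet,
    (ncard_le_ncard_of_injOn f hfK hinj).trans (ncard_coe_finset K).le⟩

def xsInBand (P : Finset (ℝ × ℝ)) (c d : ℝ) : Set ℝ :=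
  Prod.fst '' {p ∈ (P : Set (ℝ × ℝ)) | p.2 ∈ Ioo c d}

theorem compl_xsInBand_mem_nhds {P : Finset (ℝ × ℝ)} {c d s : ℝ} (hs : s ∉ xsInBand P c d) :
    (xsInBand P c d)ᶜ ∈ 𝓝 s :=
  ((P.finite_toSet.subset fun _ hp => hp.1).image _).isClosed.isOpen_compl.mem_nhds hs

/-- `o` supports the side `{s} × [lo, hi]` of a rectangle: `none` if the side lies on the
line `x = bd`, `some p` if `p` lies in the relative interior of the side. -/
def IsSideSupport (bd s lo hi : ℝ) : Option (ℝ × ℝ) → Prop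
  | none => s = bd
  | some p => p.1 = s ∧ p.2 ∈ Ioo lo hi

namespace IsSideSupport

variable {bd s s' lo hi lo' hi' : ℝ} {o : Option (ℝ × ℝ)}

theorem eq (h : IsSideSupport bd s lo hi o) (h' : IsSideSupport bd s' lo' hi' o) : s = s' := by
  cases o with
  | none => exact h.trans h'.symm
  | some p => exact h.1.symm.trans h'.1

theorem exists_mem_Ioo (h : IsSideSupport bd s lo hi o) (h' : IsSideSupport bd s' lo' hi' o)
    (ho : o ≠ none) : ∃ y ∈ Ioo lo hi, y ∈ Ioo lo' hi' := by
  obtain ⟨p, rfl⟩ := Option.ne_none_iff_exists'.1 ho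
  exact ⟨p.2, h.2, h'.2⟩

end IsSideSupport

theorem exists_isSideSupport {P : Finset (ℝ × ℝ)} {bd s lo hi : ℝ}
    (h : s = bd ∨ s ∈ xsInBand P lo hi) : ∃ o ∈ P.insertNone, IsSideSupport bd s lo hi o := by
  rcases h with h | ⟨p, ⟨hp, hpI⟩, rfl⟩
  · exact ⟨none, Finset.none_mem_insertNone, h⟩
  · exact ⟨some p, Finset.some_mem_insertNone.2 hp, rfl, hpI⟩

/-- Supports of bottom sides are points of `P` with their coordinates swapped. -/
def Encodes (x₀ x₁ y₀ : ℝ) :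
    (Option (ℝ × ℝ) × Option (ℝ × ℝ)) ⊕ Option (ℝ × ℝ) → ℝ × ℝ × ℝ × ℝ → Prop
  | .inl (l, r), (a, b, c, d) =>
      (l ≠ none ∨ r ≠ none) ∧ IsSideSupport x₀ a c d l ∧ IsSideSupport x₁ b c d r
  | .inr o, (a, b, c, _) => a = x₀ ∧ b = x₁ ∧ IsSideSupport y₀ c a b o

section

variable {P : Finset (ℝ × ℝ)} {x₀ x₁ y₀ y₁ a b c d : ℝ}

theorem emptyRect_image_swap :
    EmptyRect (P.image Prod.swap) y₀ y₁ x₀ x₁ c d a b ↔ EmptyRect P x₀ x₁ y₀ y₁ a b c d := by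
  simp only [EmptyRect, Finset.forall_mem_image, Prod.fst_swap, Prod.snd_swap]
  grind

theorem maxEmptyRect_image_swap :
    MaxEmptyRect (P.image Prod.swap) y₀ y₁ x₀ x₁ c d a b ↔
      MaxEmptyRect P x₀ x₁ y₀ y₁ a b c d := by
  simp only [MaxEmptyRect, emptyRect_image_swap]
  refine and_congr_right fun _ => ⟨fun h a' b' c' d' hE ha hb hc hd => ?_,
    fun h c' d' a' b' hE hc hd ha hb => ?_⟩
  · obtain ⟨hc', hd', ha', hb'⟩ := h c' d' a' b' hE hc hd ha hb
    exact ⟨ha', hb', hc', hd'⟩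
  · obtain ⟨ha', hb', hc', hd'⟩ := h a' b' c' d' hE ha hb hc hd
    exact ⟨hc', hd', ha', hb'⟩

namespace MaxEmptyRect

theorem left_eq_or_mem_xsInBand (h : MaxEmptyRect P x₀ x₁ y₀ y₁ a b c d) :
    a = x₀ ∨ a ∈ xsInBand P c d := by
  refine or_iff_not_imp_right.2 fun ha => by_contra fun hne => ?_
  obtain ⟨⟨hx₀a, hab, hbx₁, hy₀c, hcd, hdy₁, hempty⟩, hmax⟩ := h
  obtain ⟨a', ⟨hx₀a', ha'a⟩, hgap⟩ :=
    exists_Ioc_subset_of_mem_nhds' (compl_xsInBand_mem_nhds ha) (hx₀a.lt_of_ne' hne)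
  have hE : EmptyRect P x₀ x₁ y₀ y₁ a' b c d := by
    refine ⟨hx₀a', ha'a.trans hab, hbx₁, hy₀c, hcd, hdy₁,
      fun p hp ⟨ha'p, hpb, hcp, hpd⟩ => ?_⟩
    rcases le_or_gt p.1 a with hpa | hap
    · exact hgap ⟨ha'p, hpa⟩ ⟨p, ⟨hp, hcp, hpd⟩, rfl⟩
    · exact hempty p hp ⟨hap, hpb, hcp, hpd⟩
  exact ha'a.ne (hmax a' b c d hE ha'a.le le_rfl le_rfl le_rfl).1

theorem right_eq_or_mem_xsInBand (h : MaxEmptyRect P x₀ x₁ y₀ y₁ a b c d) :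
    b = x₁ ∨ b ∈ xsInBand P c d := by
  refine or_iff_not_imp_right.2 fun hb => by_contra fun hne => ?_
  obtain ⟨⟨hx₀a, hab, hbx₁, hy₀c, hcd, hdy₁, hempty⟩, hmax⟩ := h
  obtain ⟨b', ⟨hbb', hb'x₁⟩, hgap⟩ :=
    exists_Ico_subset_of_mem_nhds' (compl_xsInBand_mem_nhds hb) (hbx₁.lt_of_ne hne)
  have hE : EmptyRect P x₀ x₁ y₀ y₁ a b' c d := by
    refine ⟨hx₀a, hab.trans hbb', hb'x₁, hy₀c, hcd, hdy₁,
      fun p hp ⟨hap, hpb', hcp, hpd⟩ => ?_⟩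
    rcases lt_or_ge p.1 b with hpb | hbp
    · exact hempty p hp ⟨hap, hpb, hcp, hpd⟩
    · exact hgap ⟨hbp, hpb'⟩ ⟨p, ⟨hp, hcp, hpd⟩, rfl⟩
  exact hbb'.ne' (hmax a b' c d hE le_rfl hbb'.le le_rfl le_rfl).2.1

theorem bottom_eq_or_mem_xsInBand (h : MaxEmptyRect P x₀ x₁ y₀ y₁ a b c d) :
    c = y₀ ∨ c ∈ xsInBand (P.image Prod.swap) a b :=
  left_eq_or_mem_xsInBand (maxEmptyRect_image_swap.2 h)

theorem eq_of_mem_Ioo {c' d' y : ℝ} (h : MaxEmptyRect P x₀ x₁ y₀ y₁ a b c d)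
    (h' : MaxEmptyRect P x₀ x₁ y₀ y₁ a b c' d') (hy : y ∈ Ioo c d) (hy' : y ∈ Ioo c' d') :
    c = c' ∧ d = d' := by
  obtain ⟨⟨hx₀a, hab, hbx₁, hy₀c, hcd, hdy₁, hempty⟩, hmax⟩ := h
  obtain ⟨⟨-, -, -, hy₀c', -, hdy₁', hempty'⟩, hmax'⟩ := h'
  have hunion : Ioo c d ∪ Ioo c' d' = Ioo (min c c') (max d d') :=
    Ioo_union_Ioo' (hy'.1.trans hy.2) (hy.1.trans hy'.2)
  have hE : EmptyRect P x₀ x₁ y₀ y₁ a b (min c c') (max d d') := by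
    refine ⟨hx₀a, hab, hbx₁, le_min hy₀c hy₀c',
      (min_le_left _ _).trans_lt (hcd.trans_le (le_max_left _ _)), max_le hdy₁ hdy₁',
      fun p hp ⟨hap, hpb, hcp, hpd⟩ => ?_⟩
    rcases hunion.symm.subset ⟨hcp, hpd⟩ with hp2 | hp2
    · exact hempty p hp ⟨hap, hpb, hp2⟩
    · exact hempty' p hp ⟨hap, hpb, hp2⟩
  obtain ⟨-, -, hc, hd⟩ := hmax a b _ _ hE le_rfl le_rfl (min_le_left _ _) (le_max_left _ _)
  obtain ⟨-, -, hc', hd'⟩ := hmax' a b _ _ hE le_rfl le_rfl (min_le_right _ _) (le_max_right _ _)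
  exact ⟨hc.symm.trans hc', hd.symm.trans hd'⟩

theorem eq_of_bottom_eq {d' : ℝ} (h : MaxEmptyRect P x₀ x₁ y₀ y₁ a b c d)
    (h' : MaxEmptyRect P x₀ x₁ y₀ y₁ a b c d') : d = d' := by
  obtain ⟨y, hcy, hy⟩ := exists_between (lt_min h.1.2.2.2.2.1 h'.1.2.2.2.2.1)
  exact (h.eq_of_mem_Ioo h' ⟨hcy, hy.trans_le (min_le_left _ _)⟩
    ⟨hcy, hy.trans_le (min_le_right _ _)⟩).2

theorem exists_encodes (h : MaxEmptyRect P x₀ x₁ y₀ y₁ a b c d) :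
    ∃ k ∈ (P.insertNone ×ˢ P.insertNone).disjSum (P.image Prod.swap).insertNone,
      Encodes x₀ x₁ y₀ k (a, b, c, d) := by
  obtain ⟨l, hl, hla⟩ := exists_isSideSupport h.left_eq_or_mem_xsInBand
  obtain ⟨r, hr, hrb⟩ := exists_isSideSupport h.right_eq_or_mem_xsInBand
  by_cases hlr : l ≠ none ∨ r ≠ none
  · exact ⟨.inl (l, r), Finset.inl_mem_disjSum.2 (Finset.mem_product.2 ⟨hl, hr⟩), hlr, hla, hrb⟩
  · obtain ⟨rfl, rfl⟩ : l = none ∧ r = none := by simpa only [not_or, not_not] using hlr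
    obtain ⟨o, ho, hoc⟩ := exists_isSideSupport h.bottom_eq_or_mem_xsInBand
    exact ⟨.inr o, Finset.inr_mem_disjSum.2 ho, hla, hrb, hoc⟩

theorem eq_of_encodes {a' b' c' d' : ℝ}
    {k : (Option (ℝ × ℝ) × Option (ℝ × ℝ)) ⊕ Option (ℝ × ℝ)}
    (h : MaxEmptyRect P x₀ x₁ y₀ y₁ a b c d) (h' : MaxEmptyRect P x₀ x₁ y₀ y₁ a' b' c' d')
    (hk : Encodes x₀ x₁ y₀ k (a, b, c, d)) (hk' : Encodes x₀ x₁ y₀ k (a', b', c', d')) :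
    (a, b, c, d) = (a', b', c', d') := by
  rcases k with ⟨l, r⟩ | o
  · obtain ⟨hlr, hl, hr⟩ := hk
    obtain ⟨-, hl', hr'⟩ := hk'
    obtain rfl := hl.eq hl'
    obtain rfl := hr.eq hr'
    obtain ⟨y, hy, hy'⟩ := hlr.elim (hl.exists_mem_Ioo hl') (hr.exists_mem_Ioo hr')
    obtain ⟨rfl, rfl⟩ := h.eq_of_mem_Ioo h' hy hy'
    rfl
  · obtain ⟨rfl, rfl, hc⟩ := hk
    obtain ⟨rfl, rfl, hc'⟩ := hk'
    obtain rfl := hc.eq hc'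
    rw [h.eq_of_bottom_eq h']

end MaxEmptyRect

end

theorem mer_count_quadratic_general
    (x₀ x₁ y₀ y₁ : ℝ)
    (P : Finset (ℝ × ℝ)) :
    Set.Finite {q : ℝ × ℝ × ℝ × ℝ |
        MaxEmptyRect P x₀ x₁ y₀ y₁ q.1 q.2.1 q.2.2.1 q.2.2.2} ∧
      {q : ℝ × ℝ × ℝ × ℝ |
        MaxEmptyRect P x₀ x₁ y₀ y₁ q.1 q.2.1 q.2.2.1 q.2.2.2}.ncard
          ≤ (P.card + 2) ^ 2 := by
  refine (Set.finite_and_ncard_le_of_cover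
    ((P.insertNone ×ˢ P.insertNone).disjSum (P.image Prod.swap).insertNone) (Encodes x₀ x₁ y₀)
    (fun _ h => h.exists_encodes) (fun _ _ ⟨h, hk⟩ _ ⟨h', hk'⟩ => h.eq_of_encodes h' hk hk')
    ).imp_right (·.trans ?_)
  rw [Finset.card_disjSum, Finset.card_product, Finset.card_insertNone, Finset.card_insertNone]
  nlinarith [P.card_image_le (f := Prod.swap)]

theorem mer_count_quadratic
    (x₀ x₁ y₀ y₁ : ℝ) (hx : x₀ < x₁) (hy : y₀ < y₁)
    (P : Finset (ℝ × ℝ))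
    (hP : ∀ p ∈ P, x₀ ≤ p.1 ∧ p.1 ≤ x₁ ∧ y₀ ≤ p.2 ∧ p.2 ≤ y₁) :
    Set.Finite {q : ℝ × ℝ × ℝ × ℝ |
        MaxEmptyRect P x₀ x₁ y₀ y₁ q.1 q.2.1 q.2.2.1 q.2.2.2} ∧
      {q : ℝ × ℝ × ℝ × ℝ |
        MaxEmptyRect P x₀ x₁ y₀ y₁ q.1 q.2.1 q.2.2.1 q.2.2.2}.ncard
          ≤ (P.card + 2) ^ 2 :=
  mer_count_quadratic_general x₀ x₁ y₀ y₁ P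
end

section
/- Let Q be an empty rectangle of arbitrary orientation contained in R such that no point of P lies on the boundary of Q and the boundary of Q is disjoint from the boundary of R (equivalently, Q is contained in the interior of R). Then there exists an empty rectangle Q' of arbitrary orientation contained in R with Q ⊆ Q' and area(Q') > area(Q); in particular, Q is neither of maximum area nor maximal under inclusion among empty rectangles of arbitrary orientation. -/
open Set

/-- The rigid motion of the plane given by rotation through angle `θ`
followed by translation by `t`. -/
noncomputable def rigid (θ : ℝ) (t : ℝ × ℝ) (p : ℝ × ℝ) : ℝ × ℝ :=
  (Real.cos θ * p.1 - Real.sin θ * p.2 + t.1,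
   Real.sin θ * p.1 + Real.cos θ * p.2 + t.2)

/-- The rectangle of arbitrary orientation obtained as the image of the
axis-parallel rectangle `[0,w] × [0,h]` under the rigid motion `rigid θ t`. -/
noncomputable def orientedRect (θ : ℝ) (t : ℝ × ℝ) (w h : ℝ) : Set (ℝ × ℝ) :=
  rigid θ t '' (Icc 0 w ×ˢ Icc 0 h)

/-- The four sides of the oriented rectangle `orientedRect θ t w h`:
images of the four sides of `[0,w] × [0,h]` under the rigid motion. -/
noncomputable def orientedRectSide (θ : ℝ) (t : ℝ × ℝ) (w h : ℝ) : Fin 4 → Set (ℝ × ℝ) :=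
  ![rigid θ t '' ({0} ×ˢ Icc 0 h),
    rigid θ t '' ({w} ×ˢ Icc 0 h),
    rigid θ t '' (Icc 0 w ×ˢ {(0 : ℝ)}),
    rigid θ t '' (Icc 0 w ×ˢ {h})]

/-- `orientedRect θ t w h` (with `w, h > 0`) is an empty rectangle of
arbitrary orientation w.r.t. the region `R = [x₀,x₁] × [y₀,y₁]` and the
point set `P`: it is contained in `R` and its interior contains no point
of `P`. -/
def IsEmptyOrientedRect (P : Finset (ℝ × ℝ)) (x₀ x₁ y₀ y₁ : ℝ)
    (θ : ℝ) (t : ℝ × ℝ) (w h : ℝ) : Prop :=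
  0 < w ∧ 0 < h ∧
  orientedRect θ t w h ⊆ Icc x₀ x₁ ×ˢ Icc y₀ y₁ ∧
  ∀ p ∈ P, (p : ℝ × ℝ) ∉ interior (orientedRect θ t w h)

/-!
Since `Q` meets neither `P` nor the frontier of `R`, the compact set `Q` lies in the open set
`interior R \ P`. Pulling back along the rigid motion, the box `[0,w] × [0,h]` lies in an open
set, hence so does the enlarged box `[-ε, w+ε] × [-ε, h+ε]` for some `ε > 0`; its image is an
empty rectangle of the same orientation containing `Q` and of larger area.
-/

lemma rigid_rigid (θ : ℝ) (t s p : ℝ × ℝ) :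
    rigid θ (rigid θ t s) p = rigid θ t (s + p) := by
  simp only [rigid, Prod.fst_add, Prod.snd_add, Prod.mk.injEq]
  constructor <;> ring

lemma continuous_rigid (θ : ℝ) (t : ℝ × ℝ) : Continuous (rigid θ t) := by
  unfold rigid; fun_prop

lemma orientedRect_rigid (θ : ℝ) (t s : ℝ × ℝ) (w h : ℝ) :
    orientedRect θ (rigid θ t s) w h =
      rigid θ t '' (Icc s.1 (s.1 + w) ×ˢ Icc s.2 (s.2 + h)) := by
  have hshift : (s + ·) '' (Icc 0 w ×ˢ Icc 0 h) = Icc s.1 (s.1 + w) ×ˢ Icc s.2 (s.2 + h) := by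
    rw [Icc_prod_Icc, image_const_add_Icc, Prod.mk_zero_zero, add_zero, Icc_prod_Icc]
    rfl
  rw [orientedRect, ← hshift, image_image]
  simp only [rigid_rigid]

lemma dist_projIcc_le {a b ε x : ℝ} (hab : a ≤ b) (hε : 0 ≤ ε) (hx : x ∈ Icc (a - ε) (b + ε)) :
    dist x (projIcc a b hab x) ≤ ε := by
  obtain ⟨hxa, hxb⟩ := hx
  have hlow : x - ε ≤ max a (min b x) := le_max_of_le_right (le_min (by linarith) (by linarith))
  have hupp : max a (min b x) ≤ x + ε :=
    max_le (by linarith) ((min_le_right b x).trans (by linarith))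
  rw [Real.dist_eq, coe_projIcc, abs_sub_le_iff]
  constructor <;> linarith

lemma Icc_prod_Icc_subset_cthickening {a b c d ε : ℝ} (hab : a ≤ b) (hcd : c ≤ d) (hε : 0 ≤ ε) :
    Icc (a - ε) (b + ε) ×ˢ Icc (c - ε) (d + ε) ⊆
      Metric.cthickening ε (Icc a b ×ˢ Icc c d) := by
  rintro p ⟨hp₁, hp₂⟩
  refine Metric.mem_cthickening_of_dist_le p (projIcc a b hab p.1, projIcc c d hcd p.2) ε _
    ⟨Subtype.prop _, Subtype.prop _⟩ ?_
  rw [Prod.dist_eq]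
  exact max_le (dist_projIcc_le hab hε hp₁) (dist_projIcc_le hcd hε hp₂)

lemma exists_Icc_prod_Icc_subset_open {a b c d : ℝ} (hab : a ≤ b) (hcd : c ≤ d)
    {U : Set (ℝ × ℝ)} (hU : IsOpen U) (hsub : Icc a b ×ˢ Icc c d ⊆ U) :
    ∃ ε > 0, Icc (a - ε) (b + ε) ×ˢ Icc (c - ε) (d + ε) ⊆ U := by
  obtain ⟨ε, hε, hεU⟩ :=
    (isCompact_Icc.prod isCompact_Icc).exists_cthickening_subset_open hU hsub
  exact ⟨ε, hε, (Icc_prod_Icc_subset_cthickening hab hcd hε.le).trans hεU⟩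

lemma subset_interior_of_disjoint_frontier {X : Type*} [TopologicalSpace X] {s t : Set X}
    (hst : s ⊆ t) (hfr : Disjoint (frontier s) (frontier t)) : s ⊆ interior t := by
  intro x hx
  by_contra hxt
  have hxs : x ∉ interior s := fun h => hxt (interior_mono hst h)
  exact hfr.notMem_of_mem_left ⟨subset_closure hx, hxs⟩ ⟨subset_closure (hst hx), hxt⟩

lemma notMem_of_notMem_interior_of_notMem_frontier {X : Type*} [TopologicalSpace X]
    {s : Set X} {x : X} (hi : x ∉ interior s) (hf : x ∉ frontier s) : x ∉ s := fun hx =>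
  (closure_eq_interior_union_frontier s ▸ subset_closure hx).elim hi hf

lemma isEmptyOrientedRect_of_subset {P : Finset (ℝ × ℝ)} {x₀ x₁ y₀ y₁ θ w h : ℝ} {t : ℝ × ℝ}
    (hw : 0 < w) (hh : 0 < h)
    (hsub : orientedRect θ t w h ⊆ Icc x₀ x₁ ×ˢ Icc y₀ y₁ \ P) :
    IsEmptyOrientedRect P x₀ x₁ y₀ y₁ θ t w h :=
  ⟨hw, hh, fun _ hq => (hsub hq).1, fun _ hp hpi => (hsub (interior_subset hpi)).2 hp⟩

theorem oriented_rect_free_boundary_not_maximal_general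
    (x₀ x₁ y₀ y₁ : ℝ)
    (P : Finset (ℝ × ℝ))
    (θ : ℝ) (t : ℝ × ℝ) (w h : ℝ)
    (hQ : IsEmptyOrientedRect P x₀ x₁ y₀ y₁ θ t w h)
    (hPfree : ∀ p ∈ P, (p : ℝ × ℝ) ∉ frontier (orientedRect θ t w h))
    (hRfree : frontier (orientedRect θ t w h) ∩
      frontier (Icc x₀ x₁ ×ˢ Icc y₀ y₁) = ∅) :
    ∃ θ' t' w' h', IsEmptyOrientedRect P x₀ x₁ y₀ y₁ θ' t' w' h' ∧
      orientedRect θ t w h ⊆ orientedRect θ' t' w' h' ∧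
      w * h < w' * h' := by
  obtain ⟨hw, hh, hQR, hQP⟩ := hQ
  set U := interior (Icc x₀ x₁ ×ˢ Icc y₀ y₁) \ (P : Set (ℝ × ℝ))
  have hQU : orientedRect θ t w h ⊆ U := fun q hq =>
    ⟨subset_interior_of_disjoint_frontier hQR (disjoint_iff_inter_eq_empty.mpr hRfree) hq,
      fun hqP => notMem_of_notMem_interior_of_notMem_frontier (hQP q hqP) (hPfree q hqP) hq⟩
  have hUopen : IsOpen U := isOpen_interior.sdiff P.finite_toSet.isClosed
  obtain ⟨ε, hε, hεU⟩ := exists_Icc_prod_Icc_subset_open hw.le hh.le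
    (hUopen.preimage (continuous_rigid θ t)) (image_subset_iff.mp hQU)
  have hQ' : orientedRect θ (rigid θ t (-ε, -ε)) (w + 2 * ε) (h + 2 * ε) =
      rigid θ t '' (Icc (0 - ε) (w + ε) ×ˢ Icc (0 - ε) (h + ε)) := by
    rw [orientedRect_rigid]; congr 3 <;> ring
  refine ⟨θ, rigid θ t (-ε, -ε), w + 2 * ε, h + 2 * ε, ?_, ?_, by nlinarith⟩
  · refine isEmptyOrientedRect_of_subset (by linarith) (by linarith) ?_
    rw [hQ', image_subset_iff]
    exact hεU.trans (preimage_mono (sdiff_subset_sdiff_left interior_subset))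
  · rw [hQ']
    exact image_mono (prod_mono (Icc_subset_Icc (by linarith) (by linarith))
      (Icc_subset_Icc (by linarith) (by linarith)))

theorem oriented_rect_free_boundary_not_maximal
    (x₀ x₁ y₀ y₁ : ℝ) (hx : x₀ < x₁) (hy : y₀ < y₁)
    (P : Finset (ℝ × ℝ))
    (hP : ∀ p ∈ P, (p : ℝ × ℝ) ∈ Icc x₀ x₁ ×ˢ Icc y₀ y₁)
    (θ : ℝ) (t : ℝ × ℝ) (w h : ℝ)
    (hQ : IsEmptyOrientedRect P x₀ x₁ y₀ y₁ θ t w h)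
    (hPfree : ∀ p ∈ P, (p : ℝ × ℝ) ∉ frontier (orientedRect θ t w h))
    (hRfree : frontier (orientedRect θ t w h) ∩
      frontier (Icc x₀ x₁ ×ˢ Icc y₀ y₁) = ∅) :
    ∃ θ' t' w' h', IsEmptyOrientedRect P x₀ x₁ y₀ y₁ θ' t' w' h' ∧
      orientedRect θ t w h ⊆ orientedRect θ' t' w' h' ∧
      w * h < w' * h' :=
  oriented_rect_free_boundary_not_maximal_general x₀ x₁ y₀ y₁ P θ t w h hQ hPfree hRfree
end

section
/- Let n ≥ 1 and let a : {1,…,n} → ℝ be a max-heap. Then there exists a function b : {1,…,n} → ℝ that is a rearrangement of a (i.e., b = a ∘ π for some permutation π of {1,…,n}) and a leaf position ℓ (i.e., 2ℓ > n) such that b(ℓ) = a(1) and the heap inequality b(j) ≤ b(⌊j/2⌋) holds for every j with 2 ≤ j ≤ n and j ≠ ℓ. In other words, the root of a max-heap can be deleted by keeping its value in the array at a leaf position while the heap order is preserved among all remaining positions. -/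
/-!
Sift the root down along the path of larger children: every value on that path moves up one
level and the root value lands at the leaf where the path ends. A value moved up into a node
is its larger child, so it dominates the sibling below and is dominated by the value above.
The permutation is built from the leaf upwards, one transposition (node, larger child) per level.
-/

section SiftDown

variable {α : Type*} [LinearOrder α] {n i j ℓ : ℕ} {a : ℕ → α} {π : Equiv.Perm ℕ}

def IsMaxHeap (n : ℕ) (a : ℕ → α) : Prop :=
  ∀ j, 2 ≤ j → j ≤ n → a j ≤ a (j / 2)

def largerChild (n : ℕ) (a : ℕ → α) (j : ℕ) : ℕ :=
  if 2 * j + 1 ≤ n ∧ a (2 * j) < a (2 * j + 1) then 2 * j + 1 else 2 * j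

theorem largerChild_div_two : largerChild n a j / 2 = j := by
  unfold largerChild; split_ifs <;> omega

theorem largerChild_le (h : 2 * j ≤ n) : largerChild n a j ≤ n := by
  unfold largerChild; split_ifs <;> omega

theorem le_apply_largerChild (hin : i ≤ n) (hij : i / 2 = j) :
    a i ≤ a (largerChild n a j) := by
  unfold largerChild
  obtain rfl | rfl : i = 2 * j ∨ i = 2 * j + 1 := by omega
  · split_ifs with hc
    · exact hc.2.le
    · exact le_rfl
  · by_cases hc : a (2 * j) < a (2 * j + 1)
    · rw [if_pos ⟨hin, hc⟩]
    · rw [if_neg fun h => hc h.2]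
      exact not_lt.mp hc

/-- `a ∘ π` is `a` sifted down from `j` to the leaf `ℓ`; the support condition over-approximates
the subtree of `j` by `{j} ∪ [2j, n]`. -/
structure IsSiftDown (n : ℕ) (a : ℕ → α) (j : ℕ) (π : Equiv.Perm ℕ) (ℓ : ℕ) : Prop where
  support : ∀ i, π i ≠ i → (i = j ∨ 2 * j ≤ i) ∧ i ≤ n
  le_leaf : j ≤ ℓ
  leaf_le : ℓ ≤ n
  isLeaf : n < 2 * ℓ
  apply_leaf : π ℓ = j
  apply_le : a (π j) ≤ a j
  heap : ∀ i, 2 ≤ i → i ≤ n → i ≠ ℓ → a (π i) ≤ a (π (i / 2))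

namespace IsSiftDown

theorem apply_eq_self (h : IsSiftDown n a j π ℓ) (hi : ¬((i = j ∨ 2 * j ≤ i) ∧ i ≤ n)) :
    π i = i :=
  not_imp_comm.mp (h.support i) hi

theorem of_leaf (ha : IsMaxHeap n a) (hjn : j ≤ n) (hleaf : n < 2 * j) :
    IsSiftDown n a j (Equiv.refl ℕ) j where
  support _ hi := absurd rfl hi
  le_leaf := le_rfl
  leaf_le := hjn
  isLeaf := hleaf
  apply_leaf := rfl
  apply_le := le_rfl
  heap i hi hin _ := ha i hi hin

theorem trans_swap_largerChild (ha : IsMaxHeap n a) (hj : 1 ≤ j) (hjn : 2 * j ≤ n)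
    (h : IsSiftDown n a (largerChild n a j) π ℓ) :
    IsSiftDown n a j (π.trans (Equiv.swap j (largerChild n a j))) ℓ := by
  set c := largerChild n a j
  have hc : c / 2 = j := largerChild_div_two
  have hcn : c ≤ n := largerChild_le hjn
  have hcj : a c ≤ a j := by simpa only [hc] using ha c (by omega) hcn
  have hπj : π j = j := h.apply_eq_self (by omega)
  have hcℓ : c ≤ ℓ := h.le_leaf
  have hℓn : ℓ ≤ n := h.leaf_le
  have hℓleaf : n < 2 * ℓ := h.isLeaf
  have apply_j : (π.trans (Equiv.swap j c)) j = c := by simp [hπj]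
  have apply_ℓ : (π.trans (Equiv.swap j c)) ℓ = j := by simp [h.apply_leaf]
  have apply_of_ne (i : ℕ) (hij : i ≠ j) (hiℓ : i ≠ ℓ) : (π.trans (Equiv.swap j c)) i = π i :=
    Equiv.swap_apply_of_ne_of_ne (hπj ▸ π.injective.ne hij) (h.apply_leaf ▸ π.injective.ne hiℓ)
  refine ⟨fun i hi => ?_, by omega, hℓn, hℓleaf, apply_ℓ, by rwa [apply_j], ?_⟩
  · by_cases hij : i = j
    · omega
    by_cases hiℓ : i = ℓ
    · omega
    have := h.support i (by rwa [← apply_of_ne i hij hiℓ])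
    omega
  intro i hi hin hiℓ
  by_cases hij : i = j
  · rw [hij, apply_j, apply_of_ne (j / 2) (by omega) (by omega), h.apply_eq_self (by omega)]
    exact hcj.trans (ha j (by omega) (by omega))
  rw [apply_of_ne i hij hiℓ]
  by_cases hpar : i / 2 = j
  · rw [hpar, apply_j]
    by_cases hic : i = c
    · rw [hic]; exact h.apply_le
    · rw [h.apply_eq_self (by omega)]
      exact le_apply_largerChild hin hpar
  · rw [apply_of_ne _ hpar (by omega)]
    exact h.heap i hi hin hiℓ

end IsSiftDown

theorem exists_isSiftDown (ha : IsMaxHeap n a) {j : ℕ} (hj : 1 ≤ j) (hjn : j ≤ n) :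
    ∃ π ℓ, IsSiftDown n a j π ℓ := by
  by_cases hleaf : n < 2 * j
  · exact ⟨_, _, .of_leaf ha hjn hleaf⟩
  have : largerChild n a j / 2 = j := largerChild_div_two
  obtain ⟨π, ℓ, h⟩ :=
    exists_isSiftDown (j := largerChild n a j) ha (by omega) (largerChild_le (by omega))
  exact ⟨_, _, h.trans_swap_largerChild ha hj (by omega)⟩
termination_by n - j
decreasing_by omega

end SiftDown

/-- Deleting the root of a 1-indexed binary max-heap `a : {1,…,n} → ℝ` while
keeping its value in the array: there is a rearrangement `b = a ∘ π` of `a`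
(with `π` a permutation fixing all indices outside `{1,…,n}`) and a leaf
position `ℓ` (`2ℓ > n`) such that `b ℓ = a 1` and the heap inequality
`b j ≤ b ⌊j/2⌋` holds at every position `j ∈ {2,…,n}` other than `ℓ`. -/
theorem heap_root_deletion (n : ℕ) (hn : 1 ≤ n) (a : ℕ → ℝ)
    (hheap : ∀ j, 2 ≤ j → j ≤ n → a j ≤ a (j / 2)) :
    ∃ (π : Equiv.Perm ℕ) (ℓ : ℕ),
      (∀ j, ¬(1 ≤ j ∧ j ≤ n) → π j = j) ∧
      1 ≤ ℓ ∧ ℓ ≤ n ∧ n < 2 * ℓ ∧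
      (a ∘ π) ℓ = a 1 ∧
      ∀ j, 2 ≤ j → j ≤ n → j ≠ ℓ → (a ∘ π) j ≤ (a ∘ π) (j / 2) := by
  obtain ⟨π, ℓ, h⟩ := exists_isSiftDown hheap le_rfl hn
  refine ⟨π, ℓ, fun j hj => h.apply_eq_self (by omega), h.le_leaf, h.leaf_le, h.isLeaf,
    congrArg a h.apply_leaf, h.heap⟩
end
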